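/- Let α be a type, f : α → ℝ a function with f x ∈ {0,1} for all x, and γ a real number. Let (S_k)_{k≥0} be a sequence of subsets of α with S_k ⊆ {x | f x = 1} for every k, and define M_k : α → ℝ by M_0 = 0 and M_{k+1} x = γ·M_k x + (if x ∈ S_k then 1 else 0). Then for every k and every x, f x + M_k x = f x · (1 + M_k x); that is, the additive effective cost equals the multiplicative effective cost in every round. -/

import Mathlib

open scoped Classical

/-! An entry of cost `0` is never penalized, so its modifier stays `0` in every round and both
effective costs vanish; at an entry of cost `1` both effective costs equal `1 + M`. -/

lemma modifier_eq_zero_of_forall_notMem {α R : Type*} [Semiring R] {γ : R} {S : ℕ → Set α}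
    {M : ℕ → α → R} {x : α} (hM0 : M 0 x = 0)
    (hrec : ∀ k, M (k + 1) x = γ * M k x + (if x ∈ S k then 1 else 0))
    (hx : ∀ k, x ∉ S k) : ∀ k, M k x = 0
  | 0 => hM0
  | k + 1 => by
    rw [hrec, modifier_eq_zero_of_forall_notMem hM0 hrec hx k, if_neg (hx k), mul_zero, add_zero]

/-- **Theorem 3.** For a `{0,1}`-valued constraint, if only entries with cost `1` can
ever be penalized, then under the cell-scope evaporate-then-increment dynamics the
additive effective cost equals the multiplicative effective cost in every round, i.e.
the DGLS variants `(A, γ, cel)` and `(M, γ, cel)` are equivalent for any `γ`. -/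
theorem dgls_additive_eq_multiplicative {α : Type*} (f : α → ℝ)
    (hf : ∀ x, f x = 0 ∨ f x = 1) (γ : ℝ)
    (S : ℕ → Set α) (hS : ∀ k, S k ⊆ {x | f x = 1})
    (M : ℕ → α → ℝ) (hM0 : ∀ x, M 0 x = 0)
    (hrec : ∀ k x, M (k + 1) x = γ * M k x + (if x ∈ S k then 1 else 0)) :
    ∀ k x, f x + M k x = f x * (1 + M k x) := by
  intro k x
  rcases hf x with hzero | hone
  · have hx : ∀ k, x ∉ S k := fun k hmem => by
      simpa [hzero] using hS k hmem
    rw [hzero, modifier_eq_zero_of_forall_notMem (hM0 x) (fun k => hrec k x) hx k]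
    ring
  · rw [hone]
    ring
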